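/- The map h_α ⊗ e_k ↦ h_α(t₁,…,t_n)·r_k(t_{n+1}), where r_k is the k-th Rademacher function, extends to an isomorphic embedding of H₁(δⁿ, ℓ₂) onto a complemented subspace of H₁(δ^{n+1}). -/

import Mathlib

open MeasureTheory

/-- The `L∞`-normalized Haar function adapted to `[k2ⁿ, (k+1)2ⁿ]`. -/
noncomputable def haarR (n k : ℤ) (t : ℝ) : ℝ :=
  if t ∈ Set.Ico ((k : ℝ) * 2 ^ n) (((k : ℝ) + 1/2) * 2 ^ n) then 1
  else if t ∈ Set.Ico (((k : ℝ) + 1/2) * 2 ^ n) (((k : ℝ) + 1) * 2 ^ n) then -1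
  else 0

/-- The Haar function `h_{jk}` on `[0,1]`. -/
noncomputable def haar01 (j k : ℕ) (t : ℝ) : ℝ := haarR (-(j : ℤ)) (k : ℤ) t

/-- The usual enumeration of the Haar system on `[0,1]`:
`h_0 = χ_{[0,1)}` and `h_{2^j + k} = h_{jk}` for `0 ≤ k < 2^j`.  The `k`-th Rademacher
function is `r_k = ∑_{i < 2^k} h_{2^k + i}`. -/
noncomputable def haarSeq (m : ℕ) : ℝ → ℝ :=
  if m = 0 then Set.indicator (Set.Ico (0:ℝ) 1) 1
  else haar01 (Nat.log2 m) (m - 2 ^ Nat.log2 m)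

/-- The tensor Haar function `h_β(t) = ∏ h_{β_i}(t_i)` on `[0,1]^m`. -/
noncomputable def haarTensor {m : ℕ} (β : Fin m → ℕ) (t : Fin m → ℝ) : ℝ :=
  ∏ i, haarSeq (β i) (t i)

/-- The unit cube `[0,1]^m`. -/
def unitCube (m : ℕ) : Set (Fin m → ℝ) := Set.pi Set.univ fun _ => Set.Icc (0:ℝ) 1

/-- The square-function norm of `H₁(δ^m)` on coefficients w.r.t. the tensor Haar basis:
`‖∑ b_β h_β‖ = ∫_{[0,1]^m} (∑ b_β² h_β²)^{1/2}`. -/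
noncomputable def H1Norm (m : ℕ) (b : (Fin m → ℕ) → ℝ) : ℝ :=
  ∫ t in unitCube m, Real.sqrt (∑' β : Fin m → ℕ, (b β * haarTensor β t) ^ 2)

/-- The square-function norm of `H₁(δⁿ, ℓ₂)` on coefficients `a (α, k)` w.r.t. the basis
`(h_α ⊗ e_k)`: `∫_{[0,1]ⁿ} (∑_{α,k} a_{α,k}² h_α²)^{1/2}`. -/
noncomputable def H1l2Norm (n : ℕ) (a : (Fin n → ℕ) × ℕ → ℝ) : ℝ :=
  ∫ t in unitCube n, Real.sqrt (∑' p : (Fin n → ℕ) × ℕ, (a p * haarTensor p.1 t) ^ 2)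

/-- The coefficient map of `h_α ⊗ e_k ↦ h_α(t₁,…,t_n) · r_k(t_{n+1})`: since
`r_k = ∑_{i < 2^k} h_{2^k + i}`, the coefficient of `h_α ⊗ h_{k,i}` in the image is
`a (α, k)`. -/
noncomputable def radEmbed (n : ℕ) (a : (Fin n → ℕ) × ℕ → ℝ) :
    (Fin (n + 1) → ℕ) → ℝ := fun β =>
  if β (Fin.last n) = 0 then 0
  else a (fun i => β i.castSucc, Nat.log2 (β (Fin.last n)))

/-- The coefficient map of the natural projection of `H₁(δ^{n+1})` onto the span of
`{h_α ⊗ r_k}` (conditional expectation against the Rademacher functions in the last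
variable): the `(α,k)` coefficient is `2^{-k} ∑_{i < 2^k} b (α, 2^k + i)`. -/
noncomputable def radProj (n : ℕ) (b : (Fin (n + 1) → ℕ) → ℝ) :
    (Fin n → ℕ) × ℕ → ℝ := fun p =>
  ((2 : ℝ) ^ p.2)⁻¹ * ∑ i ∈ Finset.range (2 ^ p.2), b (Fin.snoc p.1 (2 ^ p.2 + i))

lemma haarR_sq (n k : ℤ) (t : ℝ) :
    (haarR n k t) ^ 2 = if (k:ℝ) * 2 ^ n ≤ t ∧ t < ((k:ℝ)+1) * 2 ^ n then 1 else 0 := by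
  have h2 : (0:ℝ) < 2 ^ n := by positivity
  unfold haarR
  by_cases h1 : t ∈ Set.Ico ((k:ℝ) * 2 ^ n) (((k:ℝ)+1/2) * 2 ^ n)
  · rw [if_pos h1, if_pos ⟨h1.1, lt_of_lt_of_le h1.2 (by nlinarith)⟩]; norm_num
  · rw [if_neg h1]
    by_cases h2' : t ∈ Set.Ico (((k:ℝ)+1/2) * 2 ^ n) (((k:ℝ)+1) * 2 ^ n)
    · rw [if_pos h2', if_pos ⟨le_trans (by nlinarith) h2'.1, h2'.2⟩]; norm_num
    · rw [if_neg h2', if_neg]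
      · norm_num
      · rintro ⟨ha, hb⟩
        rcases lt_or_ge t (((k:ℝ)+1/2) * 2 ^ n) with h | h
        · exact h1 ⟨ha, h⟩
        · exact h2' ⟨h, hb⟩

lemma log2_pow_add (k i : ℕ) (hi : i < 2 ^ k) : Nat.log2 (2 ^ k + i) = k := by
  have h0 : 2 ^ k + i ≠ 0 := by positivity
  have h1 : k ≤ Nat.log2 (2 ^ k + i) := (Nat.le_log2 h0).2 (Nat.le_add_right _ _)
  have h2 : Nat.log2 (2 ^ k + i) < k + 1 :=
    (Nat.log2_lt h0).2 (by rw [pow_succ]; omega)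
  omega

lemma haarSeq_pow_add_sq (k i : ℕ) (hi : i < 2 ^ k) (u : ℝ) :
    (haarSeq (2 ^ k + i) u) ^ 2 =
      if (i:ℝ) / 2 ^ k ≤ u ∧ u < ((i:ℝ)+1) / 2 ^ k then 1 else 0 := by
  have h0 : 2 ^ k + i ≠ 0 := by positivity
  have hp : (0:ℝ) < 2 ^ k := by positivity
  rw [haarSeq, if_neg h0, log2_pow_add k i hi, haar01]
  have hsub : 2 ^ k + i - 2 ^ k = i := by omega
  rw [hsub, haarR_sq]
  have hz : ((2:ℝ)) ^ (-(k:ℤ)) = ((2:ℝ) ^ k)⁻¹ := by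
    rw [zpow_neg, zpow_natCast]
  rw [hz]
  simp only [Int.cast_natCast, div_eq_mul_inv]

noncomputable def MkN (k : ℕ) (u : ℝ) : ℕ := 2 ^ k + ⌊(2:ℝ) ^ k * u⌋₊

lemma MkN_ne_zero (k : ℕ) (u : ℝ) : MkN k u ≠ 0 := by unfold MkN; positivity

lemma MkN_floor_lt (k : ℕ) {u : ℝ} (hu0 : 0 ≤ u) (hu1 : u < 1) :
    ⌊(2:ℝ) ^ k * u⌋₊ < 2 ^ k := by
  have hp : (0:ℝ) < 2 ^ k := by positivity
  have h : (2:ℝ) ^ k * u < ((2 ^ k : ℕ) : ℝ) := by push_cast; nlinarith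
  exact (Nat.floor_lt (by positivity)).2 h

lemma log2_MkN (k : ℕ) {u : ℝ} (hu0 : 0 ≤ u) (hu1 : u < 1) :
    Nat.log2 (MkN k u) = k :=
  log2_pow_add k _ (MkN_floor_lt k hu0 hu1)

lemma haarSeq_MkN_sq (k : ℕ) {u : ℝ} (hu0 : 0 ≤ u) (hu1 : u < 1) :
    (haarSeq (MkN k u) u) ^ 2 = 1 := by
  have hp : (0:ℝ) < 2 ^ k := by positivity
  have hfl := MkN_floor_lt k hu0 hu1
  rw [MkN, haarSeq_pow_add_sq k _ hfl, if_pos]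
  constructor
  · rw [div_le_iff₀ hp]
    nlinarith [Nat.floor_le (show (0:ℝ) ≤ 2^k*u by positivity)]
  · rw [lt_div_iff₀ hp]
    nlinarith [Nat.lt_floor_add_one ((2:ℝ)^k*u)]

lemma eq_MkN_of_ne {m : ℕ} (hm : m ≠ 0) {u : ℝ} (hu0 : 0 ≤ u) (hu1 : u < 1)
    (h : haarSeq m u ≠ 0) : m = MkN (Nat.log2 m) u := by
  set k := Nat.log2 m with hk
  have h1 : 2 ^ k ≤ m := Nat.log2_self_le hm
  have h2 : m < 2 ^ (k+1) := Nat.lt_log2_self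
  have hi : m - 2^k < 2^k := by rw [pow_succ] at h2; omega
  have hm' : 2^k + (m - 2^k) = m := by omega
  have hp : (0:ℝ) < 2 ^ k := by positivity
  have hsq := haarSeq_pow_add_sq k (m - 2^k) hi u
  rw [hm'] at hsq
  have hne : (haarSeq m u)^2 ≠ 0 := pow_ne_zero _ h
  rw [hsq] at hne
  split_ifs at hne with hcond
  · have hfe : ⌊(2:ℝ)^k * u⌋₊ = m - 2^k := by
      rw [Nat.floor_eq_iff (by positivity)]
      constructor
      · rw [div_le_iff₀ hp] at hcond
        nlinarith [hcond.1]
      · rw [lt_div_iff₀ hp] at hcond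
        nlinarith [hcond.2]
    rw [MkN, hfe]; omega
  · exact absurd rfl hne

lemma haarR_sq_le_one (n k : ℤ) (t : ℝ) : (haarR n k t)^2 ≤ 1 := by
  rw [haarR_sq]; split_ifs <;> norm_num

lemma haarSeq_sq_le_one (m : ℕ) (u : ℝ) : (haarSeq m u)^2 ≤ 1 := by
  unfold haarSeq
  split_ifs with h
  · simp only [Set.indicator_apply]
    split_ifs <;> norm_num
  · exact haarR_sq_le_one _ _ _

lemma haarTensor_sq_le_one {m : ℕ} (β : Fin m → ℕ) (t : Fin m → ℝ) :
    (haarTensor β t)^2 ≤ 1 := by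
  rw [haarTensor, ← Finset.prod_pow]
  exact Finset.prod_le_one (fun i _ => sq_nonneg _) (fun i _ => haarSeq_sq_le_one _ _)

lemma abs_haarTensor_le_one {m : ℕ} (β : Fin m → ℕ) (t : Fin m → ℝ) :
    |haarTensor β t| ≤ 1 := by
  have := haarTensor_sq_le_one β t
  nlinarith [abs_nonneg (haarTensor β t), sq_abs (haarTensor β t)]

lemma measurable_haarSeq (m : ℕ) : Measurable (haarSeq m) := by
  unfold haarSeq haar01 haarR
  split_ifs with h
  · exact measurable_const.indicator measurableSet_Ico
  · refine Measurable.ite ?_ measurable_const (Measurable.ite ?_ measurable_const measurable_const)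
    · exact measurableSet_Ico
    · exact measurableSet_Ico

lemma measurable_haarTensor {m : ℕ} (β : Fin m → ℕ) : Measurable (haarTensor β) := by
  unfold haarTensor
  exact Finset.measurable_prod _
    (fun i _ => (measurable_haarSeq (β i)).comp (measurable_pi_apply i))

lemma haarTensor_snoc {n : ℕ} (α : Fin n → ℕ) (m : ℕ) (s : Fin n → ℝ) (u : ℝ) :
    haarTensor (Fin.snoc α m) (Fin.snoc s u) = haarTensor α s * haarSeq m u := by
  unfold haarTensor
  rw [Fin.prod_univ_castSucc]
  simp [Fin.snoc_castSucc, Fin.snoc_last]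

lemma haarTensor_split {n : ℕ} (β : Fin (n+1) → ℕ) (t : Fin (n+1) → ℝ) :
    haarTensor β t
      = haarTensor (Fin.init β) (Fin.init t) * haarSeq (β (Fin.last n)) (t (Fin.last n)) := by
  unfold haarTensor Fin.init
  rw [Fin.prod_univ_castSucc]


lemma core1 {n : ℕ} (a : (Fin n → ℕ) × ℕ → ℝ) (s : Fin n → ℝ) {u : ℝ}
    (hu0 : 0 ≤ u) (hu1 : u < 1) :
    ∑' β : Fin (n+1) → ℕ, (radEmbed n a β * haarTensor β (Fin.snoc s u)) ^ 2
      = ∑' p : (Fin n → ℕ) × ℕ, (a p * haarTensor p.1 s) ^ 2 := by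
  apply tsum_eq_tsum_of_ne_zero_bij
      (fun q => Fin.snoc (q.1.1) (MkN q.1.2 u))
  · intro x y hxy
    have h1 : ∀ i : Fin n, (x:(Fin n → ℕ) × ℕ).1 i = (y:(Fin n → ℕ) × ℕ).1 i := by
      intro i
      have := congrFun hxy i.castSucc
      simpa [Fin.snoc_castSucc] using this
    have h2 : MkN (x:(Fin n → ℕ) × ℕ).2 u = MkN (y:(Fin n → ℕ) × ℕ).2 u := by
      have := congrFun hxy (Fin.last n)
      simpa [Fin.snoc_last] using this
    have h3 : (x:(Fin n → ℕ) × ℕ).2 = (y:(Fin n → ℕ) × ℕ).2 := by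
      have := congrArg Nat.log2 h2
      rwa [log2_MkN _ hu0 hu1, log2_MkN _ hu0 hu1] at this
    exact Subtype.ext (Prod.ext (funext h1) h3)
  · rintro β hβ
    simp only [Function.mem_support] at hβ
    have h1 : radEmbed n a β ≠ 0 := fun h => hβ (by rw [h, zero_mul, zero_pow two_ne_zero])
    have h2 : haarTensor β (Fin.snoc s u) ≠ 0 :=
      fun h => hβ (by rw [h, mul_zero, zero_pow two_ne_zero])
    rw [radEmbed] at h1
    by_cases h0 : β (Fin.last n) = 0
    · rw [if_pos h0] at h1; exact absurd rfl h1
    rw [if_neg h0] at h1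
    rw [haarTensor_split, Fin.init_snoc, Fin.snoc_last] at h2
    have hh1 : haarTensor (Fin.init β) s ≠ 0 := fun h => h2 (by rw [h, zero_mul])
    have hh2 : haarSeq (β (Fin.last n)) u ≠ 0 := fun h => h2 (by rw [h, mul_zero])
    have hmk : β (Fin.last n) = MkN (Nat.log2 (β (Fin.last n))) u :=
      eq_MkN_of_ne h0 hu0 hu1 hh2
    refine ⟨⟨(Fin.init β, Nat.log2 (β (Fin.last n))), ?_⟩, ?_⟩
    · simp only [Function.mem_support]
      exact pow_ne_zero _ (mul_ne_zero h1 hh1)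
    · show Fin.snoc (Fin.init β) (MkN (Nat.log2 (β (Fin.last n))) u) = β
      rw [← hmk]
      exact Fin.snoc_init_self β
  · rintro ⟨⟨α, k⟩, hq⟩
    simp only
    have hM0 : MkN k u ≠ 0 := MkN_ne_zero k u
    have e1 : radEmbed n a (Fin.snoc α (MkN k u)) = a (α, k) := by
      rw [radEmbed]
      simp only [Fin.snoc_last, Fin.snoc_castSucc, if_neg hM0, log2_MkN k hu0 hu1]
    rw [e1, haarTensor_snoc]
    have : (a (α, k) * (haarTensor α s * haarSeq (MkN k u) u))^2
        = (a (α, k) * haarTensor α s)^2 * (haarSeq (MkN k u) u)^2 := by ring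
    rw [this, haarSeq_MkN_sq k hu0 hu1, mul_one]

lemma unitCube_measurableSet (m : ℕ) : MeasurableSet (unitCube m) :=
  MeasurableSet.univ_pi (fun _ => measurableSet_Icc)

lemma volume_unitCube (m : ℕ) : volume (unitCube m) = 1 := by
  rw [unitCube, volume_pi_pi]
  simp [Real.volume_Icc]

lemma mem_unitCube_succ_iff {n : ℕ} (t : Fin (n+1) → ℝ) :
    t ∈ unitCube (n+1) ↔ t (Fin.last n) ∈ Set.Icc (0:ℝ) 1 ∧ Fin.init t ∈ unitCube n := by
  constructor
  · intro h
    exact ⟨h (Fin.last n) trivial, fun i _ => h i.castSucc trivial⟩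
  · rintro ⟨h1, h2⟩ i _
    refine Fin.lastCases ?_ ?_ i
    · exact h1
    · intro j
      exact h2 j trivial

lemma integrableOn_of_bounded' {α : Type*} [MeasurableSpace α] {μ : Measure α} {S : Set α}
    (hS : μ S < ⊤) {f : α → ℝ} (hf : AEStronglyMeasurable f (μ.restrict S)) {M : ℝ}
    (hM : ∀ x, |f x| ≤ M) : IntegrableOn f S μ := by
  have : IsFiniteMeasure (μ.restrict S) :=
    ⟨by rwa [Measure.restrict_apply_univ]⟩
  exact Integrable.mono' (integrable_const M) hf
    (Filter.Eventually.of_forall (fun x => by simpa [Real.norm_eq_abs] using hM x))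

lemma measurable_snoc' {n : ℕ} :
    Measurable (fun z : ℝ × (Fin n → ℝ) => (Fin.snoc z.2 z.1 : Fin (n+1) → ℝ)) := by
  apply measurable_pi_iff.2
  intro i
  refine Fin.lastCases ?_ ?_ i
  · simp only [Fin.snoc_last]
    exact measurable_fst
  · intro j
    simp only [Fin.snoc_castSucc]
    exact (measurable_pi_apply j).comp measurable_snd

lemma measurable_finInit {n : ℕ} : Measurable (fun t : Fin (n+1) → ℝ => Fin.init t) :=
  measurable_pi_iff.2 (fun i => measurable_pi_apply i.castSucc)

lemma integral_cube_split {n : ℕ} (f : (Fin (n+1) → ℝ) → ℝ) (hf : Measurable f)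
    (M : ℝ) (hM : ∀ t, |f t| ≤ M) :
    IntegrableOn (fun s => ∫ u in Set.Icc (0:ℝ) 1, f (Fin.snoc s u)) (unitCube n) ∧
      ∫ t in unitCube (n+1), f t
        = ∫ s in unitCube n, ∫ u in Set.Icc (0:ℝ) 1, f (Fin.snoc s u) := by
  classical
  set e := MeasurableEquiv.piFinSuccAbove (fun _ : Fin (n+1) => ℝ) (Fin.last n) with he_def
  have MP : MeasurePreserving e volume volume := volume_preserving_piFinSuccAbove _ _
  set g : ℝ × (Fin n → ℝ) → ℝ :=
    fun z => ((Set.Icc (0:ℝ) 1) ×ˢ unitCube n).indicator (fun z => f (Fin.snoc z.2 z.1)) z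
    with hg
  have he : ∀ t, e t = (t (Fin.last n), Fin.init t) := by
    intro t
    refine Prod.ext ?_ (funext fun j => ?_)
    · rfl
    · show t ((Fin.last n).succAbove j) = t j.castSucc
      rw [Fin.succAbove_last]
  have hcomp : ∀ t, (unitCube (n+1)).indicator f t = g (e t) := by
    intro t
    rw [he t]
    by_cases ht : t ∈ unitCube (n+1)
    · rw [Set.indicator_of_mem ht]
      obtain ⟨hm1, hm2⟩ := (mem_unitCube_succ_iff t).1 ht
      rw [hg]
      simp only
      rw [Set.indicator_of_mem (Set.mem_prod.2 ⟨hm1, hm2⟩)]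
      simp [Fin.snoc_init_self]
    · rw [Set.indicator_of_notMem ht, hg]
      exact (Set.indicator_of_notMem
        (fun hmem => ht ((mem_unitCube_succ_iff t).2
          ⟨(Set.mem_prod.1 hmem).1, (Set.mem_prod.1 hmem).2⟩)) _).symm
  have hSmeas : MeasurableSet ((Set.Icc (0:ℝ) 1) ×ˢ unitCube n) :=
    measurableSet_Icc.prod (unitCube_measurableSet n)
  have hfin : volume ((Set.Icc (0:ℝ) 1) ×ˢ unitCube n) < ⊤ := by
    rw [Measure.volume_eq_prod, Measure.prod_prod, Real.volume_Icc, volume_unitCube]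
    simp
  have hgi : Integrable g volume := by
    rw [hg, integrable_indicator_iff hSmeas]
    exact integrableOn_of_bounded' hfin
      ((hf.comp measurable_snoc').aestronglyMeasurable) (fun z => hM _)
  have h3 : ∀ s, (∫ u, g (u, s))
      = (unitCube n).indicator (fun s => ∫ u in Set.Icc (0:ℝ) 1, f (Fin.snoc s u)) s := by
    intro s
    by_cases hs : s ∈ unitCube n
    · rw [Set.indicator_of_mem hs, ← integral_indicator measurableSet_Icc]
      apply integral_congr_ae
      apply Filter.Eventually.of_forall
      intro u
      rw [hg]
      simp only
      by_cases hu : u ∈ Set.Icc (0:ℝ) 1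
      · rw [Set.indicator_of_mem (Set.mem_prod.2 ⟨hu, hs⟩), Set.indicator_of_mem hu]
      · rw [Set.indicator_of_notMem (fun hmem => hu (Set.mem_prod.1 hmem).1),
          Set.indicator_of_notMem hu]
    · rw [Set.indicator_of_notMem hs]
      have hz : ∀ u, g (u, s) = 0 := fun u =>
        Set.indicator_of_notMem (fun hmem => hs (Set.mem_prod.1 hmem).2) _
      simp [hz]
  have hgi' : Integrable g (volume.prod volume) := by rwa [← Measure.volume_eq_prod]
  have key : ∫ t in unitCube (n+1), f t = ∫ s, ∫ u, g (u, s) := by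
    rw [← integral_indicator (unitCube_measurableSet (n+1))]
    calc ∫ t, (unitCube (n+1)).indicator f t = ∫ t, g (e t) := by
          apply integral_congr_ae
          exact Filter.Eventually.of_forall hcomp
      _ = ∫ z, g z := MP.integral_comp e.measurableEmbedding g
      _ = ∫ z, g z ∂(volume.prod volume) := by rw [← Measure.volume_eq_prod]
      _ = ∫ s, ∫ u, g (u, s) := integral_prod_symm g hgi'
  constructor
  · have hint : Integrable (fun s => ∫ u, g (u, s)) volume := hgi'.integral_prod_right
    have : Integrable ((unitCube n).indicator
        (fun s => ∫ u in Set.Icc (0:ℝ) 1, f (Fin.snoc s u))) volume := by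
      apply hint.congr
      exact Filter.Eventually.of_forall h3
    rwa [integrable_indicator_iff (unitCube_measurableSet n)] at this
  · rw [key]
    calc ∫ s, ∫ u, g (u, s)
        = ∫ s, (unitCube n).indicator
            (fun s => ∫ u in Set.Icc (0:ℝ) 1, f (Fin.snoc s u)) s := by
          exact integral_congr_ae (Filter.Eventually.of_forall h3)
      _ = ∫ s in unitCube n, ∫ u in Set.Icc (0:ℝ) 1, f (Fin.snoc s u) :=
          integral_indicator (unitCube_measurableSet n)

lemma null_last_eq_one {n : ℕ} :
    volume {t : Fin (n+1) → ℝ | t (Fin.last n) = (1:ℝ)} = 0 := by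
  set e := MeasurableEquiv.piFinSuccAbove (fun _ : Fin (n+1) => ℝ) (Fin.last n) with he_def
  have MP : MeasurePreserving e volume volume := volume_preserving_piFinSuccAbove _ _
  have hset : {t : Fin (n+1) → ℝ | t (Fin.last n) = 1}
      = e ⁻¹' (({(1:ℝ)} : Set ℝ) ×ˢ (Set.univ : Set (Fin n → ℝ))) := by
    ext t
    simp only [Set.mem_setOf_eq, Set.mem_preimage, Set.mem_prod, Set.mem_singleton_iff,
      Set.mem_univ, and_true]
    rfl
  rw [hset, MP.measure_preimage
    ((measurableSet_singleton (1:ℝ)).prod MeasurableSet.univ).nullMeasurableSet]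
  rw [Measure.volume_eq_prod, Measure.prod_prod, Real.volume_singleton, zero_mul]


lemma H1Norm_radEmbed {n : ℕ} (a : (Fin n → ℕ) × ℕ → ℝ)
    (ha : (Function.support a).Finite) :
    H1Norm (n+1) (radEmbed n a) = H1l2Norm n a := by
  classical
  set A := ha.toFinset with hA
  have hsum : ∀ s : Fin n → ℝ,
      (∑' p : (Fin n → ℕ) × ℕ, (a p * haarTensor p.1 s)^2)
        = ∑ p ∈ A, (a p * haarTensor p.1 s)^2 := by
    intro s
    apply tsum_eq_sum
    intro p hp
    have : a p = 0 := by
      by_contra h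
      exact hp (by simpa [hA] using h)
    simp [this]
  set G : (Fin n → ℝ) → ℝ :=
    fun s => Real.sqrt (∑ p ∈ A, (a p * haarTensor p.1 s)^2) with hG
  have hGmeas : Measurable G := by
    apply Real.continuous_sqrt.measurable.comp
    exact Finset.measurable_sum _
      (fun p _ => ((measurable_haarTensor p.1).const_mul (a p)).pow_const 2)
  have hGbd : ∀ s, |G s| ≤ Real.sqrt (∑ p ∈ A, (a p)^2) := by
    intro s
    rw [hG, abs_of_nonneg (Real.sqrt_nonneg _)]
    apply Real.sqrt_le_sqrt
    apply Finset.sum_le_sum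
    intro p _
    calc (a p * haarTensor p.1 s)^2 = (a p)^2 * (haarTensor p.1 s)^2 := by ring
      _ ≤ (a p)^2 * 1 := by nlinarith [haarTensor_sq_le_one p.1 s, sq_nonneg (a p)]
      _ = (a p)^2 := mul_one _
  have hae : ∀ᵐ t ∂(volume.restrict (unitCube (n+1))),
      Real.sqrt (∑' β : Fin (n+1) → ℕ, (radEmbed n a β * haarTensor β t)^2)
        = G (Fin.init t) := by
    have h1 : ∀ᵐ t ∂(volume.restrict (unitCube (n+1))), t (Fin.last n) ≠ 1 := by
      apply ae_restrict_of_ae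
      rw [ae_iff]
      have : {t : Fin (n+1) → ℝ | ¬ t (Fin.last n) ≠ 1}
          = {t : Fin (n+1) → ℝ | t (Fin.last n) = 1} := by
        ext t; simp
      rw [this]
      exact null_last_eq_one
    have h2 : ∀ᵐ t ∂(volume.restrict (unitCube (n+1))), t ∈ unitCube (n+1) :=
      ae_restrict_mem (unitCube_measurableSet _)
    filter_upwards [h1, h2] with t ht1 ht2
    have hIcc := ((mem_unitCube_succ_iff t).1 ht2).1
    have hu0 : 0 ≤ t (Fin.last n) := hIcc.1
    have hu1 : t (Fin.last n) < 1 := lt_of_le_of_ne hIcc.2 ht1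
    have hc := core1 a (Fin.init t) hu0 hu1
    rw [Fin.snoc_init_self] at hc
    rw [hc, hsum]
  rw [H1Norm, integral_congr_ae hae]
  obtain ⟨_, hsplit⟩ := integral_cube_split (fun t => G (Fin.init t))
    (hGmeas.comp measurable_finInit) _ (fun t => hGbd _)
  rw [hsplit]
  have hinner : ∀ s : Fin n → ℝ,
      (∫ u in Set.Icc (0:ℝ) 1, G (Fin.init (Fin.snoc s u : Fin (n+1) → ℝ))) = G s := by
    intro s
    have : ∀ u : ℝ, G (Fin.init (Fin.snoc s u : Fin (n+1) → ℝ)) = G s := by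
      intro u
      rw [Fin.init_snoc]
    rw [integral_congr_ae (Filter.Eventually.of_forall this), setIntegral_const]
    rw [measureReal_def, Real.volume_Icc]
    norm_num
  calc ∫ s in unitCube n, ∫ u in Set.Icc (0:ℝ) 1, G (Fin.init (Fin.snoc s u : Fin (n+1) → ℝ))
      = ∫ s in unitCube n, G s :=
        integral_congr_ae (Filter.Eventually.of_forall
          (fun s => hinner s))
    _ = H1l2Norm n a := by
        rw [H1l2Norm]
        apply integral_congr_ae
        apply Filter.Eventually.of_forall
        intro s
        simp only
        rw [hsum]

lemma radProj_support_finite {n : ℕ} (b : (Fin (n+1) → ℕ) → ℝ)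
    (hb : (Function.support b).Finite) :
    (Function.support (radProj n b)).Finite := by
  apply Set.Finite.subset
    (hb.image (fun β => (Fin.init β, Nat.log2 (β (Fin.last n)))))
  intro p hp
  simp only [Function.mem_support, radProj] at hp
  have hsum : ∑ i ∈ Finset.range (2 ^ p.2), b (Fin.snoc p.1 (2 ^ p.2 + i)) ≠ 0 := by
    intro h
    exact hp (by rw [h, mul_zero])
  obtain ⟨i, hi, hbne⟩ := Finset.exists_ne_zero_of_sum_ne_zero hsum
  refine ⟨Fin.snoc p.1 (2 ^ p.2 + i), hbne, ?_⟩
  show (Fin.init (Fin.snoc p.1 (2^p.2+i) : Fin (n+1) → ℕ),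
    Nat.log2 ((Fin.snoc p.1 (2^p.2+i) : Fin (n+1) → ℕ) (Fin.last n))) = p
  rw [Fin.init_snoc, Fin.snoc_last, log2_pow_add p.2 i (Finset.mem_range.1 hi)]

lemma integral_Mk (k : ℕ) (F : ℕ → ℝ) :
    ∫ u in Set.Icc (0:ℝ) 1, F (MkN k u)
      = ((2:ℝ)^k)⁻¹ * ∑ i ∈ Finset.range (2^k), F (2^k + i) := by
  have hp : (0:ℝ) < 2^k := by positivity
  have hae : ∀ᵐ u ∂(volume.restrict (Set.Icc (0:ℝ) 1)),
      F (MkN k u) = ∑ i ∈ Finset.range (2^k),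
        (Set.Ico ((i:ℝ)/2^k) (((i:ℝ)+1)/2^k)).indicator (fun _ => F (2^k+i)) u := by
    have h1 : ∀ᵐ u ∂(volume.restrict (Set.Icc (0:ℝ) 1)), u ∈ Set.Icc (0:ℝ) 1 :=
      ae_restrict_mem measurableSet_Icc
    have h2 : ∀ᵐ u ∂(volume.restrict (Set.Icc (0:ℝ) 1)), u ≠ 1 := by
      apply ae_restrict_of_ae
      rw [ae_iff]
      have : {u : ℝ | ¬ u ≠ 1} = {(1:ℝ)} := by ext; simp
      rw [this]
      exact Real.volume_singleton
    filter_upwards [h1, h2] with u hu h1u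
    have hu0 : 0 ≤ u := hu.1
    have hu1 : u < 1 := lt_of_le_of_ne hu.2 h1u
    set i0 := ⌊(2:ℝ)^k * u⌋₊ with hi0
    have hi0lt : i0 < 2^k := MkN_floor_lt k hu0 hu1
    rw [Finset.sum_eq_single i0]
    · rw [Set.indicator_of_mem]
      · rfl
      · constructor
        · rw [div_le_iff₀ hp]
          nlinarith [Nat.floor_le (show (0:ℝ) ≤ 2^k*u by positivity)]
        · rw [lt_div_iff₀ hp]
          nlinarith [Nat.lt_floor_add_one ((2:ℝ)^k*u)]
    · intro j hj hjne
      apply Set.indicator_of_notMem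
      rintro ⟨hj1, hj2⟩
      apply hjne
      rw [div_le_iff₀ hp] at hj1
      rw [lt_div_iff₀ hp] at hj2
      have : ⌊(2:ℝ)^k * u⌋₊ = j := by
        rw [Nat.floor_eq_iff (by positivity)]
        constructor <;> nlinarith
      omega
    · intro hne
      exact absurd (Finset.mem_range.2 hi0lt) hne
  rw [integral_congr_ae hae, integral_finset_sum]
  · have hterm : ∀ i ∈ Finset.range (2^k),
        (∫ u in Set.Icc (0:ℝ) 1,
          (Set.Ico ((i:ℝ)/2^k) (((i:ℝ)+1)/2^k)).indicator (fun _ => F (2^k+i)) u)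
          = ((2:ℝ)^k)⁻¹ * F (2^k+i) := by
      intro i hi
      have hsub : Set.Ico ((i:ℝ)/2^k) (((i:ℝ)+1)/2^k) ⊆ Set.Icc (0:ℝ) 1 := by
        intro x hx
        have hi2 : (i:ℝ) + 1 ≤ 2^k := by
          have := Finset.mem_range.1 hi
          have : (i:ℝ) + 1 ≤ ((2^k : ℕ):ℝ) := by exact_mod_cast this
          simpa using this
        constructor
        · have : (0:ℝ) ≤ (i:ℝ)/2^k := by positivity
          linarith [hx.1]
        · have : ((i:ℝ)+1)/2^k ≤ 1 := by
            rw [div_le_one hp]; linarith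
          linarith [hx.2]
      have harith : ((i:ℝ)+1)/2^k - (i:ℝ)/2^k = ((2:ℝ)^k)⁻¹ := by field_simp; ring
      rw [integral_indicator measurableSet_Ico, Measure.restrict_restrict measurableSet_Ico,
        Set.inter_eq_self_of_subset_left hsub, setIntegral_const, measureReal_def, Real.volume_Ico, harith]
      rw [smul_eq_mul, ENNReal.toReal_ofReal (by positivity : (0:ℝ) ≤ ((2:ℝ)^k)⁻¹)]
    rw [Finset.sum_congr rfl hterm, Finset.mul_sum]
  · intro i hi
    rw [integrable_indicator_iff measurableSet_Ico]
    refine integrableOn_const ?_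
    rw [Measure.restrict_apply measurableSet_Ico]
    exact (lt_of_le_of_lt (measure_mono Set.inter_subset_right) (by rw [Real.volume_Icc]; simp)).ne

lemma minkowski_aux {ι : Type*} (T : Finset ι) (μ : Measure ℝ) [IsFiniteMeasure μ]
    (f : ι → ℝ → ℝ) (g : ℝ → ℝ)
    (hfm : ∀ p ∈ T, Integrable (f p) μ)
    (hgi : Integrable g μ)
    (hdom : ∀ᵐ u ∂μ, Real.sqrt (∑ p ∈ T, (f p u)^2) ≤ g u) :
    Real.sqrt (∑ p ∈ T, (∫ u, f p u ∂μ)^2) ≤ ∫ u, g u ∂μ := by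
  set I : ι → ℝ := fun p => ∫ u, f p u ∂μ with hI
  set S : ℝ := ∑ p ∈ T, (I p)^2 with hS
  have hS0 : 0 ≤ S := Finset.sum_nonneg fun p _ => sq_nonneg _
  have hg0 : 0 ≤ ∫ u, g u ∂μ := by
    apply integral_nonneg_of_ae
    filter_upwards [hdom] with u hu
    exact le_trans (Real.sqrt_nonneg _) hu
  rcases eq_or_lt_of_le hS0 with h0 | hSpos
  · rw [← h0, Real.sqrt_zero]
    exact hg0
  · have key : S ≤ Real.sqrt S * ∫ u, g u ∂μ := by
      have e1 : S = ∫ u, (∑ p ∈ T, I p * f p u) ∂μ := by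
        rw [integral_finset_sum _ (fun p hp => (hfm p hp).const_mul _)]
        apply Finset.sum_congr rfl
        intro p _
        rw [integral_const_mul, sq]
      calc S = ∫ u, (∑ p ∈ T, I p * f p u) ∂μ := e1
        _ ≤ ∫ u, Real.sqrt S * g u ∂μ := ?_
        _ = Real.sqrt S * ∫ u, g u ∂μ := integral_const_mul _ _
      apply integral_mono_ae
      · exact integrable_finset_sum _ (fun p hp => (hfm p hp).const_mul _)
      · exact hgi.const_mul _
      · filter_upwards [hdom] with u hu
        have hcs := Finset.sum_mul_sq_le_sq_mul_sq T I (fun p => f p u)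
        calc (∑ p ∈ T, I p * f p u) ≤ |∑ p ∈ T, I p * f p u| := le_abs_self _
          _ = Real.sqrt ((∑ p ∈ T, I p * f p u)^2) := (Real.sqrt_sq_eq_abs _).symm
          _ ≤ Real.sqrt (S * ∑ p ∈ T, (f p u)^2) := Real.sqrt_le_sqrt hcs
          _ = Real.sqrt S * Real.sqrt (∑ p ∈ T, (f p u)^2) := Real.sqrt_mul hS0 _
          _ ≤ Real.sqrt S * g u := by
              exact mul_le_mul_of_nonneg_left hu (Real.sqrt_nonneg S)
    have hSsq : Real.sqrt S * Real.sqrt S = S := Real.mul_self_sqrt hS0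
    have hpos : 0 < Real.sqrt S := Real.sqrt_pos.2 hSpos
    rw [← mul_le_mul_iff_right₀ hpos, hSsq]
    exact key

lemma star_ineq {n : ℕ} (b : (Fin (n+1) → ℕ) → ℝ) (hb : (Function.support b).Finite)
    (s : Fin n → ℝ) :
    Real.sqrt (∑' p : (Fin n → ℕ) × ℕ, (radProj n b p * haarTensor p.1 s)^2)
      ≤ ∫ u in Set.Icc (0:ℝ) 1,
          Real.sqrt (∑' β : Fin (n+1) → ℕ, (b β * haarTensor β (Fin.snoc s u))^2) := by
  classical
  set B := hb.toFinset with hB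
  have hT := radProj_support_finite b hb
  set T := hT.toFinset with hTdef
  have hsum1 : (∑' p : (Fin n → ℕ) × ℕ, (radProj n b p * haarTensor p.1 s)^2)
      = ∑ p ∈ T, (radProj n b p * haarTensor p.1 s)^2 := by
    apply tsum_eq_sum
    intro p hp
    have : radProj n b p = 0 := by
      by_contra h
      exact hp (by simpa [hTdef] using h)
    simp [this]
  have hsumβ : ∀ t : Fin (n+1) → ℝ,
      (∑' β : Fin (n+1) → ℕ, (b β * haarTensor β t)^2)
        = ∑ β ∈ B, (b β * haarTensor β t)^2 := by
    intro t
    apply tsum_eq_sum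
    intro β hβ
    have : b β = 0 := by
      by_contra h
      exact hβ (by simpa [hB] using h)
    simp [this]
  set μ := volume.restrict (Set.Icc (0:ℝ) 1) with hμ
  haveI : IsFiniteMeasure μ := by
    constructor
    rw [hμ, Measure.restrict_apply_univ, Real.volume_Icc]
    simp
  set f : (Fin n → ℕ) × ℕ → ℝ → ℝ :=
    fun p u => |haarTensor p.1 s| * |b (Fin.snoc p.1 (MkN p.2 u))| with hf
  set g : ℝ → ℝ :=
    fun u => Real.sqrt (∑ β ∈ B, (b β * haarTensor β (Fin.snoc s u))^2) with hg
  set Mb : ℝ := ∑ β ∈ B, |b β| with hMb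
  have hMb0 : 0 ≤ Mb := Finset.sum_nonneg (fun _ _ => abs_nonneg _)
  have hbbd : ∀ β, |b β| ≤ Mb := by
    intro β
    by_cases hβ : β ∈ B
    · exact Finset.single_le_sum (f := fun β => |b β|) (fun _ _ => abs_nonneg _) hβ
    · have : b β = 0 := by
        by_contra h
        exact hβ (by simpa [hB] using h)
      rw [this, abs_zero]
      exact hMb0
  have hfm : ∀ p, Integrable (f p) μ := by
    intro p
    rw [hμ]
    refine integrableOn_of_bounded' (M := Mb)
      (show volume (Set.Icc (0:ℝ) 1) < ⊤ by rw [Real.volume_Icc]; simp) ?_ ?_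
    · apply Measurable.aestronglyMeasurable
      apply Measurable.const_mul
      have h1 : Measurable (fun u : ℝ => MkN p.2 u) := by
        apply Measurable.const_add
        exact Nat.measurable_floor.comp (measurable_id.const_mul _)
      exact (measurable_of_countable (fun m : ℕ => |b (Fin.snoc p.1 m)|)).comp h1
    · intro u
      rw [hf]
      simp only
      rw [abs_of_nonneg (by positivity)]
      calc |haarTensor p.1 s| * |b (Fin.snoc p.1 (MkN p.2 u))| ≤ 1 * Mb :=
            mul_le_mul (abs_haarTensor_le_one _ _) (hbbd _) (abs_nonneg _) zero_le_one
        _ = Mb := one_mul _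
  have hgi : Integrable g μ := by
    rw [hμ]
    refine integrableOn_of_bounded' (M := Real.sqrt (∑ β ∈ B, (b β)^2))
      (show volume (Set.Icc (0:ℝ) 1) < ⊤ by rw [Real.volume_Icc]; simp) ?_ ?_
    · apply Measurable.aestronglyMeasurable
      apply Real.continuous_sqrt.measurable.comp
      apply Finset.measurable_sum
      intro β _
      have hmeas : Measurable fun u : ℝ => haarTensor β (Fin.snoc s u) := by
        have hrw : (fun u : ℝ => haarTensor β (Fin.snoc s u)) =
            fun u => haarTensor (Fin.init β) s * haarSeq (β (Fin.last n)) u := by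
          funext u
          rw [haarTensor_split β (Fin.snoc s u), Fin.init_snoc, Fin.snoc_last]
        rw [hrw]
        exact (measurable_haarSeq _).const_mul _
      exact (hmeas.const_mul (b β)).pow_const 2
    · intro u
      rw [hg, abs_of_nonneg (Real.sqrt_nonneg _)]
      apply Real.sqrt_le_sqrt
      apply Finset.sum_le_sum
      intro β _
      calc (b β * haarTensor β (Fin.snoc s u))^2
          = (b β)^2 * (haarTensor β (Fin.snoc s u))^2 := by ring
        _ ≤ (b β)^2 * 1 := by
            nlinarith [haarTensor_sq_le_one β (Fin.snoc s u : Fin (n+1) → ℝ), sq_nonneg (b β)]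
        _ = (b β)^2 := mul_one _
  have hdom : ∀ᵐ u ∂μ, Real.sqrt (∑ p ∈ T, (f p u)^2) ≤ g u := by
    have h1 : ∀ᵐ u ∂μ, u ∈ Set.Icc (0:ℝ) 1 := by
      rw [hμ]
      exact ae_restrict_mem measurableSet_Icc
    have h2 : ∀ᵐ u ∂μ, u ≠ 1 := by
      rw [hμ]
      apply ae_restrict_of_ae
      rw [ae_iff]
      have : {u : ℝ | ¬ u ≠ 1} = {(1:ℝ)} := by ext; simp
      rw [this]
      exact Real.volume_singleton
    filter_upwards [h1, h2] with u hu h1u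
    have hu0 : 0 ≤ u := hu.1
    have hu1 : u < 1 := lt_of_le_of_ne hu.2 h1u
    rw [hg]
    apply Real.sqrt_le_sqrt
    have hterm : ∀ p : (Fin n → ℕ) × ℕ, (f p u)^2
        = (b (Fin.snoc p.1 (MkN p.2 u))
            * haarTensor (Fin.snoc p.1 (MkN p.2 u)) (Fin.snoc s u))^2 := by
      intro p
      rw [haarTensor_snoc]
      have e2 : (b (Fin.snoc p.1 (MkN p.2 u)) * (haarTensor p.1 s * haarSeq (MkN p.2 u) u))^2
          = (b (Fin.snoc p.1 (MkN p.2 u)))^2 * (haarTensor p.1 s)^2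
              * (haarSeq (MkN p.2 u) u)^2 := by ring
      rw [e2, haarSeq_MkN_sq p.2 hu0 hu1, mul_one, hf]
      simp only
      rw [mul_pow, sq_abs, sq_abs]
      ring
    set j : (Fin n → ℕ) × ℕ → (Fin (n+1) → ℕ) := fun p => Fin.snoc p.1 (MkN p.2 u) with hj
    have hjinj : ∀ x ∈ T, ∀ y ∈ T, j x = j y → x = y := by
      intro x _ y _ hxy
      rw [hj] at hxy
      simp only at hxy
      have h1' : ∀ i : Fin n, x.1 i = y.1 i := by
        intro i
        have := congrFun hxy i.castSucc
        simpa [Fin.snoc_castSucc] using this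
      have h2' : MkN x.2 u = MkN y.2 u := by
        have := congrFun hxy (Fin.last n)
        simpa [Fin.snoc_last] using this
      have h3' : x.2 = y.2 := by
        have := congrArg Nat.log2 h2'
        rwa [log2_MkN _ hu0 hu1, log2_MkN _ hu0 hu1] at this
      exact Prod.ext (funext h1') h3'
    calc ∑ p ∈ T, (f p u)^2
        = ∑ β ∈ T.image j, (b β * haarTensor β (Fin.snoc s u))^2 := by
          rw [Finset.sum_image hjinj]
          exact Finset.sum_congr rfl (fun p _ => hterm p)
      _ ≤ ∑ β ∈ T.image j ∪ B, (b β * haarTensor β (Fin.snoc s u))^2 :=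
          Finset.sum_le_sum_of_subset_of_nonneg Finset.subset_union_left
            (fun _ _ _ => sq_nonneg _)
      _ = ∑ β ∈ B, (b β * haarTensor β (Fin.snoc s u))^2 := by
          refine (Finset.sum_subset Finset.subset_union_right (fun β _ hβ => ?_)).symm
          have : b β = 0 := by
            by_contra h
            exact hβ (by simpa [hB] using h)
          simp [this]
  have h1p : ∀ p ∈ T, (radProj n b p * haarTensor p.1 s)^2 ≤ (∫ u, f p u ∂μ)^2 := by
    intro p _
    have hint : ∫ u, f p u ∂μ = |haarTensor p.1 s| * (((2:ℝ)^p.2)⁻¹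
        * ∑ i ∈ Finset.range (2^p.2), |b (Fin.snoc p.1 (2^p.2 + i))|) := by
      rw [hμ, hf]
      rw [integral_const_mul, integral_Mk p.2 (fun m => |b (Fin.snoc p.1 m)|)]
    have e1 : |radProj n b p| ≤ ((2:ℝ)^p.2)⁻¹
        * ∑ i ∈ Finset.range (2^p.2), |b (Fin.snoc p.1 (2^p.2+i))| := by
      rw [radProj]
      rw [abs_mul, abs_inv, abs_pow, abs_two]
      exact mul_le_mul_of_nonneg_left (Finset.abs_sum_le_sum_abs _ _) (by positivity)
    have habs : |radProj n b p * haarTensor p.1 s| ≤ ∫ u, f p u ∂μ := by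
      calc |radProj n b p * haarTensor p.1 s|
          = |radProj n b p| * |haarTensor p.1 s| := abs_mul _ _
        _ ≤ (((2:ℝ)^p.2)⁻¹ * ∑ i ∈ Finset.range (2^p.2), |b (Fin.snoc p.1 (2^p.2+i))|)
              * |haarTensor p.1 s| := mul_le_mul_of_nonneg_right e1 (abs_nonneg _)
        _ = |haarTensor p.1 s| * (((2:ℝ)^p.2)⁻¹
              * ∑ i ∈ Finset.range (2^p.2), |b (Fin.snoc p.1 (2^p.2+i))|) := by ring
        _ = ∫ u, f p u ∂μ := hint.symm
    have h0 : 0 ≤ ∫ u, f p u ∂μ := le_trans (abs_nonneg _) habs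
    calc (radProj n b p * haarTensor p.1 s)^2
        = |radProj n b p * haarTensor p.1 s|^2 := (sq_abs _).symm
      _ ≤ (∫ u, f p u ∂μ)^2 := by
          nlinarith [abs_nonneg (radProj n b p * haarTensor p.1 s)]
  rw [hsum1]
  calc Real.sqrt (∑ p ∈ T, (radProj n b p * haarTensor p.1 s)^2)
      ≤ Real.sqrt (∑ p ∈ T, (∫ u, f p u ∂μ)^2) :=
        Real.sqrt_le_sqrt (Finset.sum_le_sum h1p)
    _ ≤ ∫ u, g u ∂μ := minkowski_aux T μ f g (fun p _ => hfm p) hgi hdom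
    _ = ∫ u in Set.Icc (0:ℝ) 1,
          Real.sqrt (∑' β : Fin (n+1) → ℕ, (b β * haarTensor β (Fin.snoc s u))^2) := by
        rw [hμ]
        apply integral_congr_ae
        apply Filter.Eventually.of_forall
        intro u
        rw [hg]
        simp only
        rw [hsumβ]


/-- The map `h_α ⊗ e_k ↦ h_α(t₁,…,t_n) · r_k(t_{n+1})` extends to an
isomorphic embedding of `H₁(δⁿ, ℓ₂)` onto a complemented subspace of `H₁(δ^{n+1})`: there
is `C > 0` such that the embedding is a `C`-isomorphism onto its image on all finitely
supported coefficients, and the natural projection onto that image is bounded by `C`. -/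
theorem stmt19 (n : ℕ) :
    ∃ C > (0:ℝ),
      (∀ a : (Fin n → ℕ) × ℕ → ℝ, (Function.support a).Finite →
        C⁻¹ * H1l2Norm n a ≤ H1Norm (n + 1) (radEmbed n a) ∧
          H1Norm (n + 1) (radEmbed n a) ≤ C * H1l2Norm n a) ∧
      (∀ b : (Fin (n + 1) → ℕ) → ℝ, (Function.support b).Finite →
        H1Norm (n + 1) (radEmbed n (radProj n b)) ≤ C * H1Norm (n + 1) b) := by
  classical
  refine ⟨1, one_pos, ?_, ?_⟩
  · intro a ha
    rw [H1Norm_radEmbed a ha]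
    simp only [inv_one, one_mul]
    exact ⟨le_refl _, le_refl _⟩
  · intro b hb
    rw [H1Norm_radEmbed _ (radProj_support_finite b hb), one_mul]
    set B := hb.toFinset with hB
    have hsumβ : ∀ t : Fin (n+1) → ℝ,
        (∑' β : Fin (n+1) → ℕ, (b β * haarTensor β t)^2)
          = ∑ β ∈ B, (b β * haarTensor β t)^2 := by
      intro t
      apply tsum_eq_sum
      intro β hβ
      have : b β = 0 := by
        by_contra h
        exact hβ (by simpa [hB] using h)
      simp [this]
    set F : (Fin (n+1) → ℝ) → ℝ :=
      fun t => Real.sqrt (∑ β ∈ B, (b β * haarTensor β t)^2) with hF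
    have hFmeas : Measurable F := by
      apply Real.continuous_sqrt.measurable.comp
      exact Finset.measurable_sum _
        (fun β _ => ((measurable_haarTensor β).const_mul (b β)).pow_const 2)
    have hFbd : ∀ t, |F t| ≤ Real.sqrt (∑ β ∈ B, (b β)^2) := by
      intro t
      rw [hF, abs_of_nonneg (Real.sqrt_nonneg _)]
      apply Real.sqrt_le_sqrt
      apply Finset.sum_le_sum
      intro β _
      calc (b β * haarTensor β t)^2 = (b β)^2 * (haarTensor β t)^2 := by ring
        _ ≤ (b β)^2 * 1 := by nlinarith [haarTensor_sq_le_one β t, sq_nonneg (b β)]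
        _ = (b β)^2 := mul_one _
    obtain ⟨hint, hsplit⟩ := integral_cube_split F hFmeas _ hFbd
    have hH1 : H1Norm (n+1) b
        = ∫ s in unitCube n, ∫ u in Set.Icc (0:ℝ) 1, F (Fin.snoc s u) := by
      rw [H1Norm, ← hsplit]
      apply integral_congr_ae
      apply Filter.Eventually.of_forall
      intro t
      rw [hF]
      simp only
      rw [hsumβ]
    rw [hH1, H1l2Norm]
    have hTfin := radProj_support_finite b hb
    have hsum1 : ∀ s : Fin n → ℝ,
        (∑' p : (Fin n → ℕ) × ℕ, (radProj n b p * haarTensor p.1 s)^2)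
          = ∑ p ∈ hTfin.toFinset, (radProj n b p * haarTensor p.1 s)^2 := by
      intro s
      apply tsum_eq_sum
      intro p hp
      have : radProj n b p = 0 := by
        by_contra h
        exact hp (by simpa using h)
      simp [this]
    have hLrw : (fun s : Fin n → ℝ =>
        Real.sqrt (∑' p : (Fin n → ℕ) × ℕ, (radProj n b p * haarTensor p.1 s)^2))
        = fun s => Real.sqrt (∑ p ∈ hTfin.toFinset, (radProj n b p * haarTensor p.1 s)^2) :=
      funext (fun s => by rw [hsum1 s])
    have hLint : IntegrableOn (fun s : Fin n → ℝ =>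
        Real.sqrt (∑' p : (Fin n → ℕ) × ℕ, (radProj n b p * haarTensor p.1 s)^2))
        (unitCube n) volume := by
      rw [hLrw]
      refine integrableOn_of_bounded'
        (M := Real.sqrt (∑ p ∈ hTfin.toFinset, (radProj n b p)^2))
        (show volume (unitCube n) < ⊤ by rw [volume_unitCube]; exact ENNReal.one_lt_top) ?_ ?_
      · apply Measurable.aestronglyMeasurable
        apply Real.continuous_sqrt.measurable.comp
        exact Finset.measurable_sum _
          (fun p _ => ((measurable_haarTensor p.1).const_mul (radProj n b p)).pow_const 2)
      · intro s
        rw [abs_of_nonneg (Real.sqrt_nonneg _)]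
        apply Real.sqrt_le_sqrt
        apply Finset.sum_le_sum
        intro p _
        calc (radProj n b p * haarTensor p.1 s)^2
            = (radProj n b p)^2 * (haarTensor p.1 s)^2 := by ring
          _ ≤ (radProj n b p)^2 * 1 := by
              nlinarith [haarTensor_sq_le_one p.1 s, sq_nonneg (radProj n b p)]
          _ = (radProj n b p)^2 := mul_one _
    apply setIntegral_mono_on hLint hint (unitCube_measurableSet n)
    intro s _
    calc Real.sqrt (∑' p : (Fin n → ℕ) × ℕ, (radProj n b p * haarTensor p.1 s)^2)
        ≤ ∫ u in Set.Icc (0:ℝ) 1,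
            Real.sqrt (∑' β : Fin (n+1) → ℕ, (b β * haarTensor β (Fin.snoc s u))^2) :=
          star_ineq b hb s
      _ = ∫ u in Set.Icc (0:ℝ) 1, F (Fin.snoc s u) := by
          apply integral_congr_ae
          apply Filter.Eventually.of_forall
          intro u
          rw [hF]
          simp only
          rw [hsumβ]
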